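/- arXiv:2311.09956 — 3 statements merged into one kernel-verified Lean document; each statement's English description precedes it below -/
import Mathlib

section
/- Let n ≥ 1 be an integer, γ ∈ (0,∞) \ ℕ, and let j be an integer with 1 ≤ j ≤ ⌊γ/2⌋. For smooth g : (0,∞) → ℝ set Δ̃g(ρ) = ρ² g''(ρ) − (2n+1) ρ g'(ρ) + (n+1)² g(ρ). Then for every ρ > 0, ρ^{−(n+1)+γ−2j} · [ ∏_{ℓ=0}^{j−1} (Δ̃ − (γ−2ℓ)²)(Δ̃ − (γ+2ℓ−2⌊γ⌋)²) ] applied to the function ρ ↦ ρ^{n+1−γ+2j} equals the constant 4^{2j} · j! · Γ(γ+1−j) Γ(⌊γ⌋+1−j) Γ(j+1−[γ]) / ( Γ(γ+1−2j) Γ(⌊γ⌋+1−2j) Γ(1−[γ]) ). (All displayed factors commute, so the composition may be taken in any fixed order.) -/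
/-!
On `(0, ∞)` every power `ρ ^ a` is an eigenfunction of `Δ̃`, with eigenvalue `(a - n - 1)²`, so the
product of the factors `Δ̃ − c` multiplies `ρ ^ (n + 1 − γ + 2j)` by `∏ ((2j − γ)² − c)`. Each
difference of squares splits into linear factors; after reversing the order of `ℓ` these are, up to
the factor `16` per `ℓ`, the terms of `j!` and of the rising products `Γ(x + j) / Γ(x)` for
`x = γ + 1 − 2j`, `⌊γ⌋ + 1 − 2j` and `1 − [γ]`, all of which are positive because `2j ≤ ⌊γ⌋` and
`γ ∉ ℕ`.
-/

noncomputable section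

open scoped Real

/-- The radial part of the shifted complex-hyperbolic Laplacian:
Δ̃ g (ρ) = ρ² g''(ρ) − (2n+1) ρ g'(ρ) + (n+1)² g(ρ). -/
def radOp (n : ℕ) (g : ℝ → ℝ) : ℝ → ℝ :=
  fun ρ => ρ ^ 2 * deriv (deriv g) ρ - (2 * n + 1) * ρ * deriv g ρ + ((n : ℝ) + 1) ^ 2 * g ρ

/-- Apply the product of the commuting factors (Δ̃ − c), one for each `c` in the list `cs`. -/
def radProd (n : ℕ) (cs : List ℝ) (g : ℝ → ℝ) : ℝ → ℝ :=
  cs.foldr (fun c h => fun ρ => radOp n h ρ - c * h ρ) g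

open Set Finset

lemma radOp_congr (n : ℕ) {f g : ℝ → ℝ} (h : EqOn f g (Ioi 0)) :
    EqOn (radOp n f) (radOp n g) (Ioi 0) := by
  have h' := h.deriv isOpen_Ioi
  have h'' := h'.deriv isOpen_Ioi
  intro x hx
  simp only [radOp, h hx, h' hx, h'' hx]

lemma radOp_const_mul_rpow (n : ℕ) (K a : ℝ) :
    EqOn (radOp n fun x => K * x ^ a) (fun x => (a - n - 1) ^ 2 * K * x ^ a) (Ioi 0) := by
  intro x (hx : 0 < x)
  have h1 : x * x ^ (a - 1) = x ^ a := by
    rw [Real.rpow_sub_one hx.ne']; field_simp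
  have h2 : x ^ 2 * x ^ (a - 1 - 1) = x ^ a := by
    rw [Real.rpow_sub_one hx.ne', Real.rpow_sub_one hx.ne']; field_simp
  simp only [radOp, deriv_const_mul_field', Real.deriv_rpow_const']
  linear_combination (K * a * (a - 1)) * h2 - ((2 * n + 1) * K * a) * h1

lemma radProd_rpow (n : ℕ) (a : ℝ) (cs : List ℝ) :
    EqOn (radProd n cs fun x => x ^ a)
      (fun x => (cs.map fun c => (a - n - 1) ^ 2 - c).prod * x ^ a) (Ioi 0) := by
  induction cs with
  | nil => intro x _; simp [radProd]
  | cons c cs ih =>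
    intro x hx
    change radOp n (radProd n cs fun x => x ^ a) x - c * radProd n cs (fun x => x ^ a) x = _
    rw [radOp_congr n ih hx, radOp_const_mul_rpow n _ a hx, ih hx, List.map_cons, List.prod_cons]
    ring

lemma Finset.prod_range_eq_list_prod {M : Type*} [CommMonoid M] (m : ℕ) (f : ℕ → M) :
    ∏ i ∈ range m, f i = ((List.range m).map f).prod := by
  rw [Finset.prod_eq_multiset_prod]; rfl

lemma Real.Gamma_add_nat_eq_prod_mul {x : ℝ} (m : ℕ) (hx : ∀ i < m, x + i ≠ 0) :
    Real.Gamma (x + m) = (∏ i ∈ range m, (x + i)) * Real.Gamma x := by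
  induction m with
  | zero => simp
  | succ m ih =>
    rw [Nat.cast_succ, ← add_assoc, Real.Gamma_add_one (hx m m.lt_succ_self),
      ih fun i hi => hx i (hi.trans m.lt_succ_self), prod_range_succ]
    ring

lemma prod_sq_sub_sq_eq_factorial_mul_prod (γ F : ℝ) (j : ℕ) :
    (∏ ℓ ∈ range j, ((2 * j - γ) ^ 2 - (γ - 2 * ℓ) ^ 2)) *
        ∏ ℓ ∈ range j, ((2 * j - γ) ^ 2 - (γ + 2 * ℓ - 2 * F) ^ 2) =
      4 ^ (2 * j) * j.factorial *
        ((∏ i ∈ range j, (γ + 1 - 2 * j + i)) * (∏ i ∈ range j, (F + 1 - 2 * j + i)) *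
          ∏ i ∈ range j, (1 - (γ - F) + i)) := by
  have h16 : (4 : ℝ) ^ (2 * j) = ∏ _i ∈ range j, 16 := by
    rw [prod_const, card_range, pow_mul]; norm_num
  rw [← prod_range_add_one_eq_factorial, h16, Nat.cast_prod, ← prod_mul_distrib,
    ← prod_mul_distrib, ← prod_mul_distrib, ← prod_mul_distrib, ← prod_mul_distrib,
    ← prod_range_reflect (fun ℓ : ℕ => ((2 * j - γ) ^ 2 - (γ - 2 * ℓ) ^ 2) *
      ((2 * j - γ) ^ 2 - (γ + 2 * ℓ - 2 * F) ^ 2)) j]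
  -- with `ℓ = j - 1 - i` the two factors are `-4 (i + 1) (γ + 1 - 2j + i)` and
  -- `-4 (1 - (γ - F) + i) (F + 1 - 2j + i)`
  refine prod_congr rfl fun i hi => ?_
  have hij : i + 1 ≤ j := mem_range.mp hi
  push_cast [Nat.cast_sub (by omega : i ≤ j - 1), Nat.cast_sub (by omega : 1 ≤ j)]
  ring

theorem stmt1_general (n : ℕ) (γ : ℝ) (hγ0 : 0 < γ) (hγ : ∀ m : ℕ, γ ≠ m)
    (j : ℕ) (hj2 : j ≤ Nat.floor (γ / 2)) :
    ∀ ρ : ℝ, 0 < ρ →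
      ρ ^ (-(n : ℝ) - 1 + γ - 2 * j) *
        radProd n
          ((List.range j).map (fun ℓ => (γ - 2 * ℓ) ^ 2) ++
            (List.range j).map (fun ℓ => (γ + 2 * ℓ - 2 * (Nat.floor γ : ℝ)) ^ 2))
          (fun x => x ^ ((n : ℝ) + 1 - γ + 2 * j)) ρ
      = 4 ^ (2 * j) * (Nat.factorial j) *
          (Real.Gamma (γ + 1 - j) * Real.Gamma ((Nat.floor γ : ℝ) + 1 - j) *
            Real.Gamma ((j : ℝ) + 1 - (γ - Nat.floor γ))) /
          (Real.Gamma (γ + 1 - 2 * j) * Real.Gamma ((Nat.floor γ : ℝ) + 1 - 2 * j) *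
            Real.Gamma (1 - (γ - Nat.floor γ))) := by
  intro ρ hρ
  have h2jF : 2 * (j : ℝ) ≤ ⌊γ⌋₊ := by
    have := (Nat.le_floor_iff (div_nonneg hγ0.le zero_le_two)).mp hj2
    exact_mod_cast Nat.le_floor (by push_cast; linarith : ((2 * j : ℕ) : ℝ) ≤ γ)
  have hFγ : (⌊γ⌋₊ : ℝ) < γ := (Nat.floor_le hγ0.le).lt_of_ne (hγ _).symm
  have hγF : γ < ⌊γ⌋₊ + 1 := Nat.lt_floor_add_one γ
  set F : ℝ := (Nat.floor γ : ℝ)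
  have hA : 0 < γ + 1 - 2 * j := by linarith
  have hB : 0 < F + 1 - 2 * j := by linarith
  have hC : 0 < 1 - (γ - F) := by linarith
  have hΓ {x : ℝ} (hx : 0 < x) : Real.Gamma (x + j) = (∏ i ∈ range j, (x + i)) * Real.Gamma x :=
    Real.Gamma_add_nat_eq_prod_mul j fun i _ => by positivity
  rw [radProd_rpow n _ _ hρ, mul_left_comm, ← Real.rpow_add hρ,
    show -(n : ℝ) - 1 + γ - 2 * j + (n + 1 - γ + 2 * j) = 0 by ring, Real.rpow_zero, mul_one]
  simp only [bind_pure_comp, List.map_eq_map, List.map_append, List.prod_append, List.map_map,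
    ← Finset.prod_range_eq_list_prod, Function.comp_apply,
    show (n : ℝ) + 1 - γ + 2 * j - n - 1 = 2 * j - γ by ring]
  rw [show γ + 1 - j = γ + 1 - 2 * j + j by ring, show F + 1 - j = F + 1 - 2 * j + j by ring,
    show j + 1 - (γ - F) = 1 - (γ - F) + j by ring, hΓ hA, hΓ hB, hΓ hC, prod_sq_sub_sq_eq_factorial_mul_prod]
  field_simp [(Real.Gamma_pos_of_pos hA).ne', (Real.Gamma_pos_of_pos hB).ne',
    (Real.Gamma_pos_of_pos hC).ne']

theorem stmt1 (n : ℕ) (hn : 1 ≤ n) (γ : ℝ) (hγ0 : 0 < γ) (hγ : ∀ m : ℕ, γ ≠ m)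
    (j : ℕ) (hj1 : 1 ≤ j) (hj2 : j ≤ Nat.floor (γ / 2)) :
    ∀ ρ : ℝ, 0 < ρ →
      ρ ^ (-(n : ℝ) - 1 + γ - 2 * j) *
        radProd n
          ((List.range j).map (fun ℓ => (γ - 2 * ℓ) ^ 2) ++
            (List.range j).map (fun ℓ => (γ + 2 * ℓ - 2 * (Nat.floor γ : ℝ)) ^ 2))
          (fun x => x ^ ((n : ℝ) + 1 - γ + 2 * j)) ρ
      = 4 ^ (2 * j) * (Nat.factorial j) *
          (Real.Gamma (γ + 1 - j) * Real.Gamma ((Nat.floor γ : ℝ) + 1 - j) *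
            Real.Gamma ((j : ℝ) + 1 - (γ - Nat.floor γ))) /
          (Real.Gamma (γ + 1 - 2 * j) * Real.Gamma ((Nat.floor γ : ℝ) + 1 - 2 * j) *
            Real.Gamma (1 - (γ - Nat.floor γ))) :=
  stmt1_general n γ hγ0 hγ j hj2
end
end

section
/- Let n ≥ 1 be an integer, γ ∈ (0,∞) \ ℕ with ⌊γ⌋ ≥ 1, and let j be an integer with 0 ≤ j ≤ ⌊γ⌋ − ⌊γ/2⌋ − 1. For smooth g : (0,∞) → ℝ set Δ̃g(ρ) = ρ² g''(ρ) − (2n+1) ρ g'(ρ) + (n+1)² g(ρ). Then for every ρ > 0, ρ^{−(n+1)+γ−2j−2[γ]} · [ ∏_{ℓ=0}^{j} (Δ̃ − (γ−2ℓ)²) ∘ ∏_{ℓ=0}^{j−1} (Δ̃ − (γ+2ℓ−2⌊γ⌋)²) ] applied to the function ρ ↦ ρ^{n+1−γ+2j+2[γ]} equals the constant −4^{2j+1} · j! · Γ(j+1+[γ]) Γ(⌊γ⌋+1−j) Γ(⌊γ⌋+1−j−[γ]) / ( Γ([γ]) Γ(⌊γ⌋−2j) Γ(⌊γ⌋+1−2j−[γ])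 ). (All displayed factors commute, so the composition may be taken in any fixed order.) -/
/-! `x ^ a` is an eigenfunction of `Δ̃` on `(0, ∞)` with eigenvalue `(a - n - 1) ^ 2`, so the
composite operator multiplies `ρ ^ a` by `∏ ((a - n - 1) ^ 2 - c)`. For the exponent at hand,
`a - n - 1 = [γ] + 2j - ⌊γ⌋`, and each factor splits as a difference of squares into `-4` times
two linear terms. The four resulting falling products are Gamma quotients by `Γ (x + 1) = x Γ x`;
all Gamma arguments involved are positive because `0 < [γ] < 1` and `2j + 1 ≤ ⌊γ⌋`. -/

noncomputable section

open scoped Real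

open Set Finset

lemma List.prod_map_range_eq_prod_range {M : Type*} [CommMonoid M] (f : ℕ → M) (m : ℕ) :
    ((List.range m).map f).prod = ∏ i ∈ Finset.range m, f i := by
  rw [prod_eq_multiset_prod]
  rfl

lemma deriv_eqOn_const_mul_rpow {g : ℝ → ℝ} {D a : ℝ}
    (hg : EqOn g (fun x => D * x ^ a) (Ioi 0)) :
    EqOn (deriv g) (fun x => D * a * x ^ (a - 1)) (Ioi 0) := by
  intro ρ hρ
  rw [(Filter.eventuallyEq_of_mem (isOpen_Ioi.mem_nhds hρ) hg).deriv_eq,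
    deriv_const_mul _ (Real.differentiableAt_rpow_const_of_ne a (ne_of_gt hρ)),
    Real.deriv_rpow_const]
  exact (mul_assoc _ _ _).symm

lemma radOp_eqOn_const_mul_rpow (n : ℕ) {g : ℝ → ℝ} {D a : ℝ}
    (hg : EqOn g (fun x => D * x ^ a) (Ioi 0)) :
    EqOn (radOp n g) (fun x => (a - n - 1) ^ 2 * D * x ^ a) (Ioi 0) := by
  intro ρ hρ
  have hg' := deriv_eqOn_const_mul_rpow hg
  have hρ2 : ρ ^ 2 * ρ ^ (a - 1 - 1) = ρ ^ a := by
    rw [← Real.rpow_two, ← Real.rpow_add hρ]; ring_nf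
  have hρ1 : ρ * ρ ^ (a - 1) = ρ ^ a := by
    rw [mul_comm, ← Real.rpow_add_one (ne_of_gt hρ)]; ring_nf
  rw [radOp, deriv_eqOn_const_mul_rpow hg' hρ, hg' hρ, hg hρ]
  linear_combination (D * a * (a - 1)) * hρ2 - ((2 * n + 1) * D * a) * hρ1

lemma radProd_eqOn_const_mul_rpow (n : ℕ) (cs : List ℝ) {g : ℝ → ℝ} {D a : ℝ}
    (hg : EqOn g (fun x => D * x ^ a) (Ioi 0)) :
    EqOn (radProd n cs g)
      (fun x => (cs.map fun c => (a - n - 1) ^ 2 - c).prod * D * x ^ a) (Ioi 0) := by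
  induction cs with
  | nil => simpa [radProd] using hg
  | cons c cs ih =>
    intro ρ hρ
    change radOp n (radProd n cs g) ρ - c * radProd n cs g ρ = _
    rw [radOp_eqOn_const_mul_rpow n ih hρ, ih hρ, List.map_cons, List.prod_cons]
    ring

lemma prod_range_sub_eq_Gamma_div {x : ℝ} {m : ℕ} (hx : (m : ℝ) < x + 1) :
    ∏ ℓ ∈ range m, (x - ℓ) = Real.Gamma (x + 1) / Real.Gamma (x + 1 - m) := by
  induction m with
  | zero => simp [(Real.Gamma_pos_of_pos (show 0 < x + 1 by simpa using hx)).ne']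
  | succ m ih =>
    push_cast at hx
    have hxm : x - m ≠ 0 := by linarith
    rw [prod_range_succ, ih (by linarith),
      show x + 1 - m = (x - m) + 1 by ring, Real.Gamma_add_one hxm]
    push_cast
    field_simp
    ring_nf

lemma prod_factors_eq_Gamma {F ε : ℝ} (j : ℕ) (hε0 : 0 < ε) (hε1 : ε < 1)
    (hF : 2 * (j : ℝ) + 1 ≤ F) :
    (∏ ℓ ∈ range (j + 1), (-4 * ((F - j - ℓ) * (j + ε - ℓ)))) *
        ∏ ℓ ∈ range j, (-4 * ((j - ℓ) * (F - ε - j - ℓ)))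
      = -(4 ^ (2 * j + 1)) * (Nat.factorial j) *
          (Real.Gamma ((j : ℝ) + 1 + ε) * Real.Gamma (F + 1 - j) * Real.Gamma (F + 1 - j - ε)) /
          (Real.Gamma ε * Real.Gamma (F - 2 * j) * Real.Gamma (F + 1 - 2 * j - ε)) := by
  have hΓε : ∏ ℓ ∈ range (j + 1), ((j + ε : ℝ) - ℓ) = Real.Gamma (j + 1 + ε) / Real.Gamma ε := by
    rw [prod_range_sub_eq_Gamma_div (by push_cast; linarith)]
    congr 2 <;> push_cast <;> ring
  have hΓF : ∏ ℓ ∈ range (j + 1), ((F - j : ℝ) - ℓ) =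
      Real.Gamma (F + 1 - j) / Real.Gamma (F - 2 * j) := by
    rw [prod_range_sub_eq_Gamma_div (by push_cast; linarith)]
    congr 2 <;> push_cast <;> ring
  have hΓj : ∏ ℓ ∈ range j, ((j : ℝ) - ℓ) = Nat.factorial j := by
    rw [prod_range_sub_eq_Gamma_div (by linarith), Real.Gamma_nat_eq_factorial]
    simp
  have hΓFε : ∏ ℓ ∈ range j, ((F - ε - j : ℝ) - ℓ) =
      Real.Gamma (F + 1 - j - ε) / Real.Gamma (F + 1 - 2 * j - ε) := by
    rw [prod_range_sub_eq_Gamma_div (by linarith)]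
    congr 2 <;> ring
  have hΓε0 : Real.Gamma ε ≠ 0 := (Real.Gamma_pos_of_pos hε0).ne'
  have hΓF0 : Real.Gamma (F - 2 * j) ≠ 0 := (Real.Gamma_pos_of_pos (by linarith)).ne'
  have hΓFε0 : Real.Gamma (F + 1 - 2 * j - ε) ≠ 0 := (Real.Gamma_pos_of_pos (by linarith)).ne'
  have hsign : (-4 : ℝ) ^ (j + 1) * (-4) ^ j = -(4 ^ (2 * j + 1)) := by
    rw [← pow_add, show j + 1 + j = 2 * j + 1 by ring]
    exact Odd.neg_pow ⟨j, rfl⟩ 4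
  rw [← hsign]
  simp only [prod_mul_distrib, prod_const, card_range]
  rw [hΓε, hΓF, hΓj, hΓFε]
  field_simp

theorem stmt2_general (n : ℕ) (γ : ℝ) (hγ0 : 0 < γ) (hγ : ∀ m : ℕ, γ ≠ m)
    (j : ℕ) (hj : j + Nat.floor (γ / 2) + 1 ≤ Nat.floor γ) :
    ∀ ρ : ℝ, 0 < ρ →
      ρ ^ (-(n : ℝ) - 1 + γ - 2 * j - 2 * (γ - Nat.floor γ)) *
        radProd n
          ((List.range (j + 1)).map (fun ℓ => (γ - 2 * ℓ) ^ 2) ++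
            (List.range j).map (fun ℓ => (γ + 2 * ℓ - 2 * (Nat.floor γ : ℝ)) ^ 2))
          (fun x => x ^ ((n : ℝ) + 1 - γ + 2 * j + 2 * (γ - Nat.floor γ))) ρ
      = -(4 ^ (2 * j + 1)) * (Nat.factorial j) *
          (Real.Gamma ((j : ℝ) + 1 + (γ - Nat.floor γ)) *
            Real.Gamma ((Nat.floor γ : ℝ) + 1 - j) *
            Real.Gamma ((Nat.floor γ : ℝ) + 1 - j - (γ - Nat.floor γ))) /
          (Real.Gamma (γ - Nat.floor γ) * Real.Gamma ((Nat.floor γ : ℝ) - 2 * j) *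
            Real.Gamma ((Nat.floor γ : ℝ) + 1 - 2 * j - (γ - Nat.floor γ))) := by
  intro ρ hρ
  have hε0 : 0 < γ - Nat.floor γ :=
    sub_pos.2 ((Nat.floor_le hγ0.le).lt_of_ne' (hγ _))
  have hε1 : γ - Nat.floor γ < 1 := by linarith [Nat.lt_floor_add_one γ]
  have hF : 2 * (j : ℝ) + 1 ≤ Nat.floor γ := by
    rw [Nat.floor_div_ofNat] at hj
    exact_mod_cast (by omega : 2 * j + 1 ≤ Nat.floor γ)
  generalize (Nat.floor γ : ℝ) = F at hε0 hε1 hF ⊢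
  obtain ⟨ε, rfl⟩ : ∃ ε, γ = F + ε := ⟨γ - F, by ring⟩
  simp only [add_sub_cancel_left] at hε0 hε1 ⊢
  rw [radProd_eqOn_const_mul_rpow n _ (D := 1) (fun x _ => (one_mul _).symm) hρ]
  have hcancel : ρ ^ (-(n : ℝ) - 1 + (F + ε) - 2 * j - 2 * ε) *
      ρ ^ ((n : ℝ) + 1 - (F + ε) + 2 * j + 2 * ε) = 1 := by
    rw [← Real.rpow_add hρ, ← Real.rpow_zero ρ]
    ring_nf
  beta_reduce
  rw [mul_one, mul_left_comm, hcancel, mul_one, ← prod_factors_eq_Gamma j hε0 hε1 hF]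
  -- `(List.range m).map (fun ℓ => … ℓ …)` with real `ℓ` elaborates as a `do` block casting
  -- `List.range m` into `List ℝ`.
  simp only [List.bind_eq_flatMap, List.pure_def, ← List.map_eq_flatMap, List.map_append,
    List.prod_append, List.map_map, Function.comp_def, List.prod_map_range_eq_prod_range]
  congr 1 <;> refine prod_congr rfl fun ℓ _ => ?_ <;> ring

theorem stmt2 (n : ℕ) (hn : 1 ≤ n) (γ : ℝ) (hγ0 : 0 < γ) (hγ : ∀ m : ℕ, γ ≠ m)
    (hfl : 1 ≤ Nat.floor γ)
    (j : ℕ) (hj : j + Nat.floor (γ / 2) + 1 ≤ Nat.floor γ) :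
    ∀ ρ : ℝ, 0 < ρ →
      ρ ^ (-(n : ℝ) - 1 + γ - 2 * j - 2 * (γ - Nat.floor γ)) *
        radProd n
          ((List.range (j + 1)).map (fun ℓ => (γ - 2 * ℓ) ^ 2) ++
            (List.range j).map (fun ℓ => (γ + 2 * ℓ - 2 * (Nat.floor γ : ℝ)) ^ 2))
          (fun x => x ^ ((n : ℝ) + 1 - γ + 2 * j + 2 * (γ - Nat.floor γ))) ρ
      = -(4 ^ (2 * j + 1)) * (Nat.factorial j) *
          (Real.Gamma ((j : ℝ) + 1 + (γ - Nat.floor γ)) *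
            Real.Gamma ((Nat.floor γ : ℝ) + 1 - j) *
            Real.Gamma ((Nat.floor γ : ℝ) + 1 - j - (γ - Nat.floor γ))) /
          (Real.Gamma (γ - Nat.floor γ) * Real.Gamma ((Nat.floor γ : ℝ) - 2 * j) *
            Real.Gamma ((Nat.floor γ : ℝ) + 1 - 2 * j - (γ - Nat.floor γ))) :=
  stmt2_general n γ hγ0 hγ j hj
end
end

section
/- Let γ ∈ (0,∞) \ ℕ and let j be an integer with 0 ≤ j ≤ ⌊γ⌋. Then (−1)^{⌊γ⌋} · ∏_{i ∈ {0,1,…,⌊γ⌋}, i ≠ j} ( (γ−2j)² − (γ−2i)² ) = 4^{⌊γ⌋} · j! · (⌊γ⌋−j)! · Γ(γ+1−j) Γ(j+1−[γ]) / ( Γ(γ+1−2j) Γ(2j+1−γ) ). (Since γ is not an integer, all Gamma arguments on the right are non-integers, so both sides are well defined.) -/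
/-!
Since `(γ - 2j)² - (γ - 2i)² = 4 (i - j) (γ - j - i)`, the product splits into `4^⌊γ⌋`, the
factor `∏ (i - j) = (-1)^j j! (⌊γ⌋ - j)!`, and two falling factorials of `γ - j - i`, one over
`i < j` and one over `i > j`. Each falling factorial is a rising factorial in disguise, and a rising
factorial `x (x + 1) ⋯ (x + m - 1)` is `Γ(x + m) / Γ(x)` as long as `x` is not a nonpositive
integer, which holds for the arguments `γ + 1 - 2j` and `2j + 1 - γ` because `γ` is not an integer.
-/

open Finset Polynomial Nat

theorem Finset.prod_range_succ_erase {M : Type*} [CommMonoid M] (f : ℕ → M) {n j : ℕ}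
    (hj : j ≤ n) :
    ∏ i ∈ (range (n + 1)).erase j, f i =
      (∏ i ∈ range j, f i) * ∏ k ∈ range (n - j), f (j + 1 + k) := by
  have hsplit : (range (n + 1)).erase j = range j ∪ Ico (j + 1) (n + 1) := by
    ext i
    simp only [mem_erase, mem_range, mem_union, mem_Ico]
    omega
  have hdisj : Disjoint (range j) (Ico (j + 1) (n + 1)) :=
    disjoint_left.2 fun i hi hi' => by simp only [mem_range, mem_Ico] at hi hi'; omega
  rw [hsplit, prod_union hdisj, prod_Ico_eq_prod_range, show n + 1 - (j + 1) = n - j by omega]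

theorem Real.Gamma_add_nat_div_Gamma_eq {n : ℕ} (x : ℝ) (hx : ∀ k : ℕ, x ≠ -k) :
    Real.Gamma (x + n) / Real.Gamma x = (ascPochhammer ℝ n).eval x := by
  induction n with
  | zero => simp [div_self (Real.Gamma_ne_zero hx)]
  | succ n ih =>
    have hxn : x + n ≠ 0 := fun h => hx n (by linarith)
    rw [Nat.cast_succ, ← add_assoc, Real.Gamma_add_one hxn, ascPochhammer_succ_eval, ← ih]
    ring

section CommRing

variable {R : Type*} [CommRing R]

theorem prod_range_natCast_sub_self (j : ℕ) :
    ∏ i ∈ range j, ((i : R) - j) = (-1) ^ j * j ! := by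
  calc ∏ i ∈ range j, ((i : R) - j) = ∏ i ∈ range j, (-1 * ((j : R) - i)) :=
        prod_congr rfl fun _ _ => by ring
    _ = (-1) ^ j * (descPochhammer R j).eval (j : R) := by
        rw [prod_mul_distrib, prod_const, card_range, descPochhammer_eval_eq_prod_range]
    _ = (-1) ^ j * j ! := by rw [descPochhammer_eval_eq_descFactorial, Nat.descFactorial_self]

theorem prod_range_sq_sub_sq_below (a : R) (j : ℕ) :
    ∏ i ∈ range j, ((a - 2 * j) ^ 2 - (a - 2 * i) ^ 2) =
      4 ^ j * (-1) ^ j * j ! * (descPochhammer R j).eval (a - j) := by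
  calc _ = ∏ i ∈ range j, (4 * ((i : R) - j) * (a - j - i)) :=
        prod_congr rfl fun _ _ => by ring
    _ = _ := by
        rw [prod_mul_distrib, prod_mul_distrib, prod_const, card_range,
          prod_range_natCast_sub_self, descPochhammer_eval_eq_prod_range]
        ring

theorem prod_range_sq_sub_sq_above (a : R) (j m : ℕ) :
    ∏ k ∈ range m, ((a - 2 * j) ^ 2 - (a - 2 * ((j + 1 + k : ℕ) : R)) ^ 2) =
      4 ^ m * m ! * (descPochhammer R m).eval (a - 2 * j - 1) := by
  calc _ = ∏ k ∈ range m, (4 * ((k + 1 : ℕ) : R) * (a - 2 * j - 1 - k)) :=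
        prod_congr rfl fun _ _ => by push_cast; ring
    _ = _ := by
        rw [prod_mul_distrib, prod_mul_distrib, prod_const, card_range, ← Nat.cast_prod,
          prod_range_add_one_eq_factorial, descPochhammer_eval_eq_prod_range]

theorem neg_one_pow_mul_prod_range_succ_erase_sq_sub_sq (a : R) {n j : ℕ} (hj : j ≤ n) :
    (-1) ^ n * ∏ i ∈ (range (n + 1)).erase j, ((a - 2 * j) ^ 2 - (a - 2 * i) ^ 2) =
      4 ^ n * j ! * (n - j) ! * (descPochhammer R j).eval (a - j) *
        ((-1) ^ (n - j) * (descPochhammer R (n - j)).eval (a - 2 * j - 1)) := by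
  rw [prod_range_succ_erase _ hj, prod_range_sq_sub_sq_below, prod_range_sq_sub_sq_above]
  obtain ⟨m, rfl⟩ := Nat.exists_eq_add_of_le hj
  have hsq : ((-1 : R) ^ j) ^ 2 = 1 := by simp [← pow_mul]
  rw [Nat.add_sub_cancel_left, pow_add, pow_add]
  linear_combination (4 ^ j * 4 ^ m * (-1) ^ m * j ! * m ! * (descPochhammer R j).eval (a - j) *
    (descPochhammer R m).eval (a - 2 * j - 1)) * hsq

end CommRing

theorem stmt3 (γ : ℝ) (hγ0 : 0 < γ) (hγ : ∀ m : ℕ, γ ≠ m)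
    (j : ℕ) (hj : j ≤ Nat.floor γ) :
    (-1 : ℝ) ^ (Nat.floor γ) *
        ∏ i ∈ (Finset.range (Nat.floor γ + 1)).erase j,
          ((γ - 2 * j) ^ 2 - (γ - 2 * i) ^ 2)
      = 4 ^ (Nat.floor γ) * (Nat.factorial j) * (Nat.factorial (Nat.floor γ - j)) *
          Real.Gamma (γ + 1 - j) * Real.Gamma ((j : ℝ) + 1 - (γ - Nat.floor γ)) /
          (Real.Gamma (γ + 1 - 2 * j) * Real.Gamma (2 * j + 1 - γ)) := by
  set n := ⌊γ⌋₊
  have hγℤ : ∀ z : ℤ, γ ≠ z := by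
    intro z h
    lift z to ℕ using (by exact_mod_cast h ▸ hγ0.le)
    exact hγ z h
  have hx : ∀ k : ℕ, γ + 1 - 2 * j ≠ -k := fun k h =>
    hγℤ (2 * j - 1 - k) (by push_cast; linarith)
  have hy : ∀ k : ℕ, 2 * j + 1 - γ ≠ -k := fun k h =>
    hγℤ (2 * j + 1 + k) (by push_cast; linarith)
  have hbelow : (descPochhammer ℝ j).eval (γ - j) =
      Real.Gamma (γ + 1 - j) / Real.Gamma (γ + 1 - 2 * j) := by
    rw [descPochhammer_eval_eq_ascPochhammer, show γ - j - j + 1 = γ + 1 - 2 * j by ring,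
      ← Real.Gamma_add_nat_div_Gamma_eq _ hx]
    ring_nf
  have habove : (-1) ^ (n - j) * (descPochhammer ℝ (n - j)).eval (γ - 2 * j - 1) =
      Real.Gamma (j + 1 - (γ - n)) / Real.Gamma (2 * j + 1 - γ) := by
    rw [← ascPochhammer_eval_neg_eq_descPochhammer, show -(γ - 2 * j - 1) = 2 * j + 1 - γ by ring,
      ← Real.Gamma_add_nat_div_Gamma_eq _ hy]
    push_cast [hj]
    ring_nf
  rw [neg_one_pow_mul_prod_range_succ_erase_sq_sub_sq γ hj, hbelow, habove]
  ring
end
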